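/- arXiv:2208.04989 — 2 statements merged into one kernel-verified Lean document; each statement's English description precedes it below -/
import Mathlib

section
/- Let q_1, …, q_N ∈ ℝ^m be unit vectors whose span equals a subspace V ⊆ ℝ^m, and let ψ ∈ V with ψ ≠ 0. Then ‖∏_{k=1}^N (I - q_k q_kᵀ) ψ‖₂ < ‖ψ‖₂; i.e., there exists γ ∈ (0,1), depending on q_1,…,q_N, such that ‖∏_{k=1}^N (I - q_k q_kᵀ) ψ‖₂ ≤ γ ‖ψ‖₂ for all ψ ∈ V. -/
/-!
Each factor `I - q qᵀ` with `‖q‖ = 1` sends `x` to `x - ⟪q, x⟫ q`, whose squared norm is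
`‖x‖² - ⟪q, x⟫²`: it never increases the norm and preserves it only at its fixed points, the
vectors orthogonal to `q`. If the product preserves `‖ψ‖`, then every factor does, so `ψ` is
orthogonal to every `q_k`, hence to their span `V ∋ ψ`, and `ψ = 0`. The uniform constant `γ`
comes from compactness: in finite dimension the operator norm of the product restricted to `V` is
attained on the unit ball, so it is `< 1`.
-/

open Matrix

open scoped RealInnerProductSpace

namespace ContinuousLinearMap

section ListProd

variable {R E : Type*} [Semiring R] [SeminormedAddCommGroup E] [Module R E]

theorem norm_list_prod_apply_le {l : List (E →L[R] E)} (hle : ∀ f ∈ l, ∀ x, ‖f x‖ ≤ ‖x‖)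
    (x : E) : ‖l.prod x‖ ≤ ‖x‖ := by
  induction l with
  | nil => simp
  | cons f l ih =>
    simp only [List.forall_mem_cons] at hle
    exact (hle.1 _).trans (ih hle.2)

theorem list_prod_apply_eq_self {l : List (E →L[R] E)} {x : E} (hfix : ∀ f ∈ l, f x = x) :
    l.prod x = x := by
  induction l with
  | nil => simp
  | cons f l ih =>
    simp only [List.forall_mem_cons] at hfix
    rw [List.prod_cons, mul_apply_eq_comp, ih hfix.2, hfix.1]

theorem forall_apply_eq_self_of_norm_list_prod_apply_eq {l : List (E →L[R] E)}
    (hle : ∀ f ∈ l, ∀ x, ‖f x‖ ≤ ‖x‖) (hfix : ∀ f ∈ l, ∀ x, ‖f x‖ = ‖x‖ → f x = x) {x : E}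
    (hx : ‖l.prod x‖ = ‖x‖) : ∀ f ∈ l, f x = x := by
  induction l with
  | nil => simp
  | cons f l ih =>
    simp only [List.forall_mem_cons] at hle hfix ⊢
    rw [List.prod_cons, mul_apply_eq_comp] at hx
    have htail : ‖l.prod x‖ = ‖x‖ :=
      le_antisymm (norm_list_prod_apply_le hle.2 x) (hx ▸ hle.1 _)
    have hfix_tail := ih hle.2 hfix.2 htail
    rw [list_prod_apply_eq_self hfix_tail] at hx
    exact ⟨hfix.1 x hx, hfix_tail⟩

end ListProd

section FiniteDimensional

variable {𝕜 E F : Type*} [RCLike 𝕜] [NormedAddCommGroup E] [NormedSpace 𝕜 E]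
  [FiniteDimensional 𝕜 E] [SeminormedAddCommGroup F] [NormedSpace 𝕜 F]

theorem exists_mem_closedBall_norm_apply_eq_opNorm (f : E →L[𝕜] F) :
    ∃ x ∈ Metric.closedBall (0 : E) 1, ‖f x‖ = ‖f‖ := by
  have := FiniteDimensional.proper_rclike 𝕜 E
  have hcompact : IsCompact ((fun x => ‖f x‖) '' Metric.closedBall (0 : E) 1) :=
    (isCompact_closedBall 0 1).image (by fun_prop)
  rw [← f.sSup_unitClosedBall_eq_norm]
  exact hcompact.sSup_mem ((Metric.nonempty_closedBall.2 zero_le_one).image _)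

theorem opNorm_lt_one_of_norm_apply_lt (f : E →L[𝕜] F) (hf : ∀ x, x ≠ 0 → ‖f x‖ < ‖x‖) :
    ‖f‖ < 1 := by
  obtain ⟨x, hx, hfx⟩ := f.exists_mem_closedBall_norm_apply_eq_opNorm
  rw [mem_closedBall_zero_iff] at hx
  rcases eq_or_ne x 0 with rfl | hx0
  · simp [← hfx]
  · exact hfx ▸ (hf x hx0).trans_le hx

theorem exists_mem_Ioo_norm_apply_le_of_norm_apply_lt (f : E →L[𝕜] F) (V : Submodule 𝕜 E)
    (hf : ∀ x ∈ V, x ≠ 0 → ‖f x‖ < ‖x‖) :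
    ∃ γ ∈ Set.Ioo (0 : ℝ) 1, ∀ x ∈ V, ‖f x‖ ≤ γ * ‖x‖ := by
  set g := f ∘L V.subtypeL
  have hg : ‖g‖ < 1 :=
    g.opNorm_lt_one_of_norm_apply_lt fun x hx => hf x x.2 (by simpa using hx)
  refine ⟨(‖g‖ + 1) / 2, ⟨by positivity, by linarith⟩, fun x hx => ?_⟩
  calc ‖f x‖ = ‖g ⟨x, hx⟩‖ := rfl
    _ ≤ ‖g‖ * ‖x‖ := g.le_opNorm _
    _ ≤ (‖g‖ + 1) / 2 * ‖x‖ := by gcongr; linarith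

end FiniteDimensional

end ContinuousLinearMap

theorem eq_zero_of_mem_span_of_forall_inner_eq_zero {𝕜 E ι : Type*} [RCLike 𝕜]
    [NormedAddCommGroup E] [InnerProductSpace 𝕜 E] {v : ι → E} {x : E}
    (hx : x ∈ Submodule.span 𝕜 (Set.range v)) (hv : ∀ i, inner 𝕜 (v i) x = 0) : x = 0 := by
  have hspan : Submodule.span 𝕜 (Set.range v) ≤ (𝕜 ∙ x)ᗮ := by
    rw [Submodule.span_le]
    rintro - ⟨i, rfl⟩
    rw [SetLike.mem_coe, Submodule.mem_orthogonal_singleton_iff_inner_left]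
    exact hv i
  exact inner_self_eq_zero.1 (Submodule.mem_orthogonal_singleton_iff_inner_right.1 (hspan hx))

section RemoveComponent

variable {E : Type*} [NormedAddCommGroup E] [InnerProductSpace ℝ E] {q : E}

theorem norm_sub_inner_smul_sq (hq : ‖q‖ = 1) (x : E) :
    ‖x - ⟪q, x⟫ • q‖ ^ 2 = ‖x‖ ^ 2 - ⟪q, x⟫ ^ 2 := by
  rw [norm_sub_sq_real, real_inner_smul_right, norm_smul, hq, Real.norm_eq_abs, mul_one, sq_abs,
    real_inner_comm x q]
  ring

theorem norm_sub_inner_smul_le (hq : ‖q‖ = 1) (x : E) : ‖x - ⟪q, x⟫ • q‖ ≤ ‖x‖ := by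
  rw [← pow_le_pow_iff_left₀ (norm_nonneg _) (norm_nonneg _) two_ne_zero,
    norm_sub_inner_smul_sq hq]
  nlinarith [sq_nonneg ⟪q, x⟫]

theorem norm_sub_inner_smul_eq_iff (hq : ‖q‖ = 1) {x : E} :
    ‖x - ⟪q, x⟫ • q‖ = ‖x‖ ↔ ⟪q, x⟫ = 0 := by
  rw [← sq_eq_sq₀ (norm_nonneg _) (norm_nonneg _), norm_sub_inner_smul_sq hq]
  constructor <;> intro h
  · nlinarith [sq_nonneg ⟪q, x⟫]
  · simp [h]

end RemoveComponent

theorem Matrix.toEuclideanCLM_one_sub_vecMulVec_self_apply {n : Type*} [Fintype n]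
    [DecidableEq n] (q x : EuclideanSpace ℝ n) :
    toEuclideanCLM (𝕜 := ℝ) (1 - vecMulVec q q) x = x - ⟪q, x⟫ • q := by
  ext i
  simp [vecMulVec_mulVec, PiLp.inner_apply, dotProduct, mul_comm]

/-- If unit vectors `q 1, …, q N` span the subspace `V` then the ordered
product `∏_{k=1}^N (I - q_k q_kᵀ)` (with `q 0` applied first) strictly contracts every
nonzero `ψ ∈ V`; equivalently there exists `γ ∈ (0,1)` with
`‖∏ (I - q_k q_kᵀ) ψ‖₂ ≤ γ ‖ψ‖₂` for all `ψ ∈ V`. -/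
theorem stmt5 {m N : ℕ} (q : Fin N → EuclideanSpace ℝ (Fin m))
    (hq : ∀ k, ‖q k‖ = 1)
    (V : Submodule ℝ (EuclideanSpace ℝ (Fin m)))
    (hspan : Submodule.span ℝ (Set.range q) = V) :
    (∀ ψ ∈ V, ψ ≠ 0 →
      ‖Matrix.toEuclideanLin
          ((List.ofFn fun k : Fin N =>
            (1 : Matrix (Fin m) (Fin m) ℝ) - Matrix.vecMulVec (q k) (q k)).reverse.prod) ψ‖
        < ‖ψ‖) ∧
    ∃ γ ∈ Set.Ioo (0 : ℝ) 1, ∀ ψ ∈ V,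
      ‖Matrix.toEuclideanLin
          ((List.ofFn fun k : Fin N =>
            (1 : Matrix (Fin m) (Fin m) ℝ) - Matrix.vecMulVec (q k) (q k)).reverse.prod) ψ‖
        ≤ γ * ‖ψ‖ := by
  set P := fun k => toEuclideanCLM (𝕜 := ℝ) (1 - vecMulVec (q k) (q k))
  have hP : ∀ k x, P k x = x - ⟪q k, x⟫ • q k := fun k =>
    toEuclideanCLM_one_sub_vecMulVec_self_apply (q k)
  have hT : toEuclideanCLM (𝕜 := ℝ) ((List.ofFn fun k =>
      (1 : Matrix (Fin m) (Fin m) ℝ) - vecMulVec (q k) (q k)).reverse.prod) =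
      (List.ofFn P).reverse.prod := by
    rw [map_list_prod, List.map_reverse, List.map_ofFn]
    rfl
  have hle : ∀ f ∈ (List.ofFn P).reverse, ∀ x, ‖f x‖ ≤ ‖x‖ := by
    simpa only [List.mem_reverse, List.forall_mem_ofFn_iff, hP] using
      fun k => norm_sub_inner_smul_le (hq k)
  have hfix : ∀ f ∈ (List.ofFn P).reverse, ∀ x, ‖f x‖ = ‖x‖ → f x = x := by
    simp only [List.mem_reverse, List.forall_mem_ofFn_iff, hP]
    intro k x hx
    simp [(norm_sub_inner_smul_eq_iff (hq k)).1 hx]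
  have hstrict : ∀ ψ ∈ V, ψ ≠ 0 → ‖(List.ofFn P).reverse.prod ψ‖ < ‖ψ‖ := by
    intro ψ hψ hψ0
    refine (ContinuousLinearMap.norm_list_prod_apply_le hle ψ).lt_of_ne fun heq => hψ0 ?_
    have hfixψ := ContinuousLinearMap.forall_apply_eq_self_of_norm_list_prod_apply_eq hle hfix heq
    simp only [List.mem_reverse, List.forall_mem_ofFn_iff] at hfixψ
    refine eq_zero_of_mem_span_of_forall_inner_eq_zero (hspan ▸ hψ) fun k => ?_
    rw [← norm_sub_inner_smul_eq_iff (hq k), ← hP, hfixψ k]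
  change (∀ ψ ∈ V, ψ ≠ 0 → ‖toEuclideanCLM (𝕜 := ℝ) _ ψ‖ < ‖ψ‖) ∧
    ∃ γ ∈ Set.Ioo (0 : ℝ) 1, ∀ ψ ∈ V, ‖toEuclideanCLM (𝕜 := ℝ) _ ψ‖ ≤ γ * ‖ψ‖
  rw [hT]
  exact ⟨hstrict, ContinuousLinearMap.exists_mem_Ioo_norm_apply_le_of_norm_apply_lt _ V hstrict⟩
end

section
/- Let g ∈ ℝⁿ be fixed and let ĝ = S Sᵀ g where conditionally ‖ĝ‖₂² − ‖g‖₂² is sub-Exponential with parameters (‖g‖₂⁴/(Cp), ω), i.e., E[exp(t(‖ĝ‖₂² − ‖g‖₂²))] ≤ exp(t²‖g‖₂⁴/(2Cp)) for |t| ≤ 1/ω. Then for λ terms g_i with ‖g_i‖₂ ≤ M for all i, and ĝ_i formed sequentially with each sub-Exponential bound holding conditionally on the past, the average satisfies: for |t| ≤ 1/ω, E[∏_{i=1}^λ exp((t/λ)(‖ĝ_i‖₂² − ‖g_i‖₂²))] ≤ exp((t² M⁴ / (2Cpλ)) Σ_{j=1}^λ 1/j) ≤ exp(t² M⁴ (1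 + log λ)/(2Cpλ)). -/
open MeasureTheory

/-- Auxiliary: MGF bound for a product of sequentially conditioned nonnegative factors. -/
lemma prod_mgf_bound {Ω : Type*} [m0 : MeasurableSpace Ω]
    (μ : Measure Ω) [IsProbabilityMeasure μ]
    (ℱ : ℕ → MeasurableSpace Ω) (hle : ∀ i, ℱ i ≤ m0)
    (f : ℕ → Ω → ℝ) (c : ℝ)
    (hmeasf : ∀ i k, i < k → Measurable[ℱ k] (f i))
    (hpos : ∀ i ω, 0 < f i ω)
    (hbd : (∃ δ : ℝ, 0 < δ ∧ ∀ i ω, δ ≤ f i ω) ∨ (∃ K : ℝ, ∀ i ω, f i ω ≤ K))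
    (hcond : ∀ k, ∀ᵐ ω ∂μ, (μ[f k | ℱ k]) ω ≤ Real.exp c) :
    ∀ k, ∫ ω, ∏ i ∈ Finset.range k, f i ω ∂μ ≤ Real.exp (k * c) := by
  intro k
  induction k with
  | zero => simp
  | succ k ih =>
    by_cases hFk1 : Integrable (fun ω => ∏ i ∈ Finset.range (k + 1), f i ω) μ
    swap
    · rw [integral_undef hFk1]
      exact (Real.exp_pos _).le
    -- notation
    have hFmeas : Measurable[ℱ k] fun ω => ∏ i ∈ Finset.range k, f i ω :=
      Finset.measurable_prod _ fun i hi => hmeasf i k (Finset.mem_range.mp hi)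
    have hFmeas0 : Measurable fun ω => ∏ i ∈ Finset.range k, f i ω :=
      hFmeas.mono (hle k) le_rfl
    have hfmeas0 : Measurable (f k) := (hmeasf k (k + 1) (Nat.lt_succ_self k)).mono (hle _) le_rfl
    have hFpos : ∀ ω, 0 < ∏ i ∈ Finset.range k, f i ω := fun ω =>
      Finset.prod_pos fun i _ => hpos i ω
    have hsucc : ∀ ω, ∏ i ∈ Finset.range (k + 1), f i ω
        = (∏ i ∈ Finset.range k, f i ω) * f k ω := fun ω => Finset.prod_range_succ _ _
    -- integrability of the partial product and of the factor
    have hFk : Integrable (fun ω => ∏ i ∈ Finset.range k, f i ω) μ ∧ Integrable (f k) μ := by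
      rcases hbd with ⟨δ, hδ, hδle⟩ | ⟨K, hK⟩
      · constructor
        · refine Integrable.mono' (hFk1.const_mul δ⁻¹) hFmeas0.aestronglyMeasurable ?_
          filter_upwards with ω
          rw [Real.norm_of_nonneg (hFpos ω).le, le_inv_mul_iff₀ hδ, hsucc ω]
          exact (mul_comm δ _).le.trans
            (mul_le_mul_of_nonneg_left (hδle k ω) (hFpos ω).le)
        · refine Integrable.mono' (hFk1.const_mul (δ ^ k)⁻¹) hfmeas0.aestronglyMeasurable ?_
          filter_upwards with ω
          rw [Real.norm_of_nonneg (hpos k ω).le, le_inv_mul_iff₀ (pow_pos hδ k), hsucc ω]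
          have hδF : δ ^ k ≤ ∏ i ∈ Finset.range k, f i ω := by
            calc δ ^ k = ∏ _i ∈ Finset.range k, δ := by
                  rw [Finset.prod_const, Finset.card_range]
              _ ≤ ∏ i ∈ Finset.range k, f i ω :=
                  Finset.prod_le_prod (fun i _ => hδ.le) (fun i _ => hδle i ω)
          exact mul_le_mul_of_nonneg_right hδF (hpos k ω).le
      · have hK' : ∀ i ω, f i ω ≤ max K 1 := fun i ω => (hK i ω).trans (le_max_left _ _)
        have hK'0 : (0 : ℝ) ≤ max K 1 := le_trans zero_le_one (le_max_right _ _)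
        constructor
        · refine Integrable.mono' (integrable_const (max K 1 ^ k)) hFmeas0.aestronglyMeasurable ?_
          filter_upwards with ω
          rw [Real.norm_of_nonneg (hFpos ω).le]
          refine le_trans
            (Finset.prod_le_prod (fun i _ => (hpos i ω).le) (fun i _ => hK' i ω)) ?_
          rw [Finset.prod_const, Finset.card_range]
        · refine Integrable.mono' (integrable_const (max K 1)) hfmeas0.aestronglyMeasurable ?_
          filter_upwards with ω
          rw [Real.norm_of_nonneg (hpos k ω).le]
          exact hK' k ω
    obtain ⟨hFk, hfk⟩ := hFk
    have hprod_eq : (fun ω => ∏ i ∈ Finset.range (k + 1), f i ω)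
        = (fun ω => ∏ i ∈ Finset.range k, f i ω) * f k := by
      funext ω; exact hsucc ω
    have hint2 : Integrable ((fun ω => ∏ i ∈ Finset.range k, f i ω) * f k) μ :=
      hprod_eq ▸ hFk1
    have hpull := condExp_mul_of_stronglyMeasurable_left (μ := μ) hFmeas.stronglyMeasurable hint2 hfk
    calc ∫ ω, ∏ i ∈ Finset.range (k + 1), f i ω ∂μ
        = ∫ ω, ((fun ω => ∏ i ∈ Finset.range k, f i ω) * f k) ω ∂μ := by rw [hprod_eq]
      _ = ∫ ω, (μ[(fun ω => ∏ i ∈ Finset.range k, f i ω) * f k | ℱ k]) ω ∂μ :=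
          (integral_condExp (hle k)).symm
      _ = ∫ ω, (∏ i ∈ Finset.range k, f i ω) * (μ[f k | ℱ k]) ω ∂μ :=
          integral_congr_ae (hpull.mono fun ω h => h)
      _ ≤ ∫ ω, (∏ i ∈ Finset.range k, f i ω) * Real.exp c ∂μ := by
          refine integral_mono_ae (integrable_condExp.congr hpull) (hFk.mul_const _) ?_
          filter_upwards [hcond k] with ω hω
          exact mul_le_mul_of_nonneg_left hω (hFpos ω).le
      _ = (∫ ω, ∏ i ∈ Finset.range k, f i ω ∂μ) * Real.exp c := integral_mul_const _ _
      _ ≤ Real.exp (k * c) * Real.exp c :=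
          mul_le_mul_of_nonneg_right ih (Real.exp_pos c).le
      _ = Real.exp ((k + 1 : ℕ) * c) := by rw [← Real.exp_add]; congr 1; push_cast; ring

/-- MGF bound for the windowed average of dependent sketched gradient-norm
errors: if each `‖g' i‖² - ‖g i‖²` is conditionally sub-Exponential given the past
(`E[exp(t(‖g' i‖²-‖g i‖²)) | ℱ i] ≤ exp(t²‖g i‖⁴/(2Cp))` for `|t| ≤ 1/w`) and
`‖g i‖ ≤ M`, then for `|t| ≤ 1/w` the product MGF satisfies
`E[∏ exp((t/λ)(‖g' i‖²-‖g i‖²))] ≤ exp((t²M⁴/(2Cpλ)) Σ_{j=1}^λ 1/j)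
  ≤ exp(t²M⁴(1+log λ)/(2Cpλ))`. -/
theorem stmt11 {n : ℕ} {Ω : Type*} [m0 : MeasurableSpace Ω]
    (μ : Measure Ω) [IsProbabilityMeasure μ]
    (lam : ℕ) (hlam : 1 ≤ lam) (C w M : ℝ) (p : ℕ)
    (hC : 0 < C) (hw : 0 < w) (hM : 0 ≤ M) (hp : 0 < p)
    (ℱ : ℕ → MeasurableSpace Ω) (hmono : Monotone ℱ) (hle : ∀ i, ℱ i ≤ m0)
    (g g' : ℕ → Ω → EuclideanSpace ℝ (Fin n))
    (hgadapt : ∀ i, Measurable[ℱ i] (g i))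
    (hg'adapt : ∀ i, Measurable[ℱ (i + 1)] (g' i))
    (hgM : ∀ i ω, ‖g i ω‖ ≤ M)
    (hMGF : ∀ i, ∀ t : ℝ, |t| ≤ 1 / w →
      ∀ᵐ ω ∂μ,
        (μ[fun ω' => Real.exp (t * (‖g' i ω'‖ ^ 2 - ‖g i ω'‖ ^ 2)) | ℱ i]) ω
          ≤ Real.exp (t ^ 2 * ‖g i ω‖ ^ 4 / (2 * C * p))) :
    ∀ t : ℝ, |t| ≤ 1 / w →
      (∫ ω, ∏ i ∈ Finset.range lam,
          Real.exp ((t / lam) * (‖g' i ω‖ ^ 2 - ‖g i ω‖ ^ 2)) ∂μ)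
        ≤ Real.exp ((t ^ 2 * M ^ 4 / (2 * C * p * lam)) *
            ∑ j ∈ Finset.range lam, (1 : ℝ) / (j + 1)) ∧
      Real.exp ((t ^ 2 * M ^ 4 / (2 * C * p * lam)) *
            ∑ j ∈ Finset.range lam, (1 : ℝ) / (j + 1))
        ≤ Real.exp (t ^ 2 * M ^ 4 * (1 + Real.log lam) / (2 * C * p * lam)) := by
  intro t ht
  have hlamR : (1 : ℝ) ≤ (lam : ℝ) := by exact_mod_cast hlam
  have hlam0 : (0 : ℝ) < (lam : ℝ) := lt_of_lt_of_le one_pos hlamR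
  set s : ℝ := t / lam with hsdef
  have hs : |s| ≤ 1 / w := by
    rw [hsdef, abs_div, Nat.abs_cast]
    exact le_trans (div_le_self (abs_nonneg t) hlamR) ht
  set c : ℝ := s ^ 2 * M ^ 4 / (2 * C * p) with hcdef
  have hc0 : 0 ≤ c := by positivity
  -- apply the auxiliary lemma
  have hmain : ∫ ω, ∏ i ∈ Finset.range lam,
      Real.exp (s * (‖g' i ω‖ ^ 2 - ‖g i ω‖ ^ 2)) ∂μ ≤ Real.exp (lam * c) := by
    refine prod_mgf_bound μ ℱ hle
      (fun i ω => Real.exp (s * (‖g' i ω‖ ^ 2 - ‖g i ω‖ ^ 2))) c ?_ ?_ ?_ ?_ lam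
    · intro i k hik
      letI : MeasurableSpace Ω := ℱ k
      have h1 : Measurable[ℱ k] (g i) := (hgadapt i).mono (hmono hik.le) le_rfl
      have h2 : Measurable[ℱ k] (g' i) := (hg'adapt i).mono (hmono hik) le_rfl
      exact (((h2.norm.pow_const 2).sub (h1.norm.pow_const 2)).const_mul s).exp
    · intro i ω; exact Real.exp_pos _
    · rcases le_or_gt 0 s with hs0 | hs0
      · refine Or.inl ⟨Real.exp (-(s * M ^ 2)), Real.exp_pos _, fun i ω => ?_⟩
        apply Real.exp_le_exp.mpr
        have hb : ‖g i ω‖ ^ 2 ≤ M ^ 2 := pow_le_pow_left₀ (norm_nonneg _) (hgM i ω) 2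
        nlinarith [sq_nonneg ‖g' i ω‖]
      · refine Or.inr ⟨Real.exp (-(s * M ^ 2)), fun i ω => ?_⟩
        apply Real.exp_le_exp.mpr
        have hb : ‖g i ω‖ ^ 2 ≤ M ^ 2 := pow_le_pow_left₀ (norm_nonneg _) (hgM i ω) 2
        nlinarith [sq_nonneg ‖g' i ω‖, sq_nonneg ‖g i ω‖]
    · intro k
      filter_upwards [hMGF k s hs] with ω hω
      refine hω.trans (Real.exp_le_exp.mpr ?_)
      rw [hcdef]
      have h4 : ‖g k ω‖ ^ 4 ≤ M ^ 4 := pow_le_pow_left₀ (norm_nonneg _) (hgM k ω) 4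
      gcongr
  have hS1 : (1 : ℝ) ≤ ∑ j ∈ Finset.range lam, (1 : ℝ) / (j + 1) := by
    have h0 : (0 : ℕ) ∈ Finset.range lam := Finset.mem_range.mpr hlam
    have := Finset.single_le_sum (f := fun j : ℕ => (1 : ℝ) / (j + 1))
      (fun i _ => by positivity) h0
    simpa using this
  have hcoef : 0 ≤ t ^ 2 * M ^ 4 / (2 * C * p * lam) := by positivity
  have hlc : (lam : ℝ) * c = t ^ 2 * M ^ 4 / (2 * C * p * lam) := by
    rw [hcdef, hsdef]
    field_simp
  constructor
  · refine hmain.trans (Real.exp_le_exp.mpr ?_)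
    rw [hlc]
    exact le_mul_of_one_le_right hcoef hS1
  · apply Real.exp_le_exp.mpr
    have hharm : (∑ j ∈ Finset.range lam, (1 : ℝ) / (j + 1)) = ((harmonic lam : ℚ) : ℝ) := by
      rw [harmonic]
      push_cast
      simp [one_div]
    have hSlog : (∑ j ∈ Finset.range lam, (1 : ℝ) / (j + 1)) ≤ 1 + Real.log lam := by
      rw [hharm]; exact harmonic_le_one_add_log lam
    calc (t ^ 2 * M ^ 4 / (2 * C * p * lam)) * ∑ j ∈ Finset.range lam, (1 : ℝ) / (j + 1)
        ≤ (t ^ 2 * M ^ 4 / (2 * C * p * lam)) * (1 + Real.log lam) :=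
          mul_le_mul_of_nonneg_left hSlog hcoef
      _ = t ^ 2 * M ^ 4 * (1 + Real.log lam) / (2 * C * p * lam) := by ring
end
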